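/- The optimal values of the LP relaxations of the five formulations DA, PAe, PAi, PA, FA (all being minimization problems with identical objective under the aggregation maps) satisfy the chain of inequalities z_LP(DA) ≥ z_LP(PAe) ≥ z_LP(PAi) ≥ z_LP(PA) ≥ z_LP(FA), where PAe, PAi, PA are all based on the same partial aggregation B. Moreover each of z_LP(PA), z_LP(PAi), z_LP(PAe) is a valid lower bound on the optimal value of the MCND mixed-integer program. -/
import Mathlib


open Finset
open scoped Classical

/-- A dispersion of commodities: a commodity set with a common origin together
with, on each arc, the subset of commodities that are disaggregated there. -/
structure Dispersion (N K : Type) [DecidableEq K] where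
  Kb : Finset K
  ob : N
  Db : N × N → Finset K
  hDb : ∀ a, Db a ⊆ Kb

variable {N K : Type} [Fintype N] [DecidableEq N] [DecidableEq K]

/-- The collection `G_b^{ij}` of commodity sets labeling the copies of arc `a`:
the aggregated block `K_b ∖ D_b^{ij}` (if nonempty) together with the
singletons of the disaggregated commodities. -/
noncomputable def Gset (b : Dispersion N K) (a : N × N) : Finset (Finset K) :=
  (if b.Kb \ b.Db a = ∅ then ∅ else {b.Kb \ b.Db a}) ∪ (b.Db a).image (fun k => ({k} : Finset K))

/-- `L_b^i`: commodities of dispersion `b` with an incident disaggregated arc at `i`. -/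
noncomputable def Lset (A : Finset (N × N)) (b : Dispersion N K) (i : N) : Finset K :=
  b.Kb.filter (fun k =>
    (∃ j, (j, i) ∈ A ∧ k ∈ b.Db (j, i)) ∨ (∃ j, (i, j) ∈ A ∧ k ∈ b.Db (i, j)))

/-- `M_b^i`: labels of the intermediate artificial nodes at node `i`. -/
noncomputable def Mset (A : Finset (N × N)) (b : Dispersion N K) (i : N) : Finset (Finset K) :=
  insert (b.Kb \ Lset A b i) ((Lset A b i).image (fun k => ({k} : Finset K)))

/-- `Ť_b^i`: distinct commodity sets labeling incoming aggregated arcs at `i`. -/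
noncomputable def Tin (A : Finset (N × N)) (b : Dispersion N K) (i : N) : Finset (Finset K) :=
  ((univ.filter (fun j => (j, i) ∈ A)).image (fun j => b.Kb \ b.Db (j, i))).filter (fun C => C ≠ ∅)

/-- `T̂_b^i`: distinct commodity sets labeling outgoing aggregated arcs at `i`. -/
noncomputable def Tout (A : Finset (N × N)) (b : Dispersion N K) (i : N) : Finset (Finset K) :=
  ((univ.filter (fun j => (i, j) ∈ A)).image (fun j => b.Kb \ b.Db (i, j))).filter (fun C => C ≠ ∅)

variable [Fintype K]

/-- DA objective. -/
noncomputable def objDA (A : Finset (N × N)) (c f : N × N → ℝ)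
    (x : K → N × N → ℝ) (y : N × N → ℝ) : ℝ :=
  (∑ a ∈ A, c a * ∑ k : K, x k a) + ∑ a ∈ A, f a * y a

/-- DA constraints (with `y ≥ 0` only; upper bounds / integrality added separately). -/
def DAcons (A : Finset (N × N)) (u : N × N → ℝ) (d : K → ℝ) (o s : K → N)
    (x : K → N × N → ℝ) (y : N × N → ℝ) : Prop :=
  (∀ (k : K) (i : N),
    ∑ j ∈ univ.filter (fun j => (i, j) ∈ A), x k (i, j)
      - ∑ j ∈ univ.filter (fun j => (j, i) ∈ A), x k (j, i)
      = ((if o k = i then (1 : ℝ) else 0) - (if s k = i then 1 else 0)) * d k)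
  ∧ (∀ a ∈ A, ∑ k : K, x k a ≤ u a * y a)
  ∧ (∀ (k : K), ∀ a ∈ A, x k a ≤ d k * y a)
  ∧ (∀ k a, 0 ≤ x k a) ∧ (∀ a, 0 ≤ y a)

/-- Values of feasible points of the DA LP relaxation. -/
noncomputable def DAvals (A : Finset (N × N)) (u : N × N → ℝ) (d : K → ℝ) (o s : K → N)
    (c f : N × N → ℝ) : Set ℝ :=
  {v | ∃ x y, DAcons A u d o s x y ∧ (∀ a, y a ≤ 1) ∧ v = objDA A c f x y}

/-- Values of feasible points of the MCND mixed-integer program (DA with binary `y`). -/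
noncomputable def MIPvals (A : Finset (N × N)) (u : N × N → ℝ) (d : K → ℝ) (o s : K → N)
    (c f : N × N → ℝ) : Set ℝ :=
  {v | ∃ x y, DAcons A u d o s x y ∧ (∀ a, y a = 0 ∨ y a = 1) ∧ v = objDA A c f x y}

/-- PA objective. -/
noncomputable def objPA {B : Type} [Fintype B] (A : Finset (N × N)) (c f : N × N → ℝ)
    (disp : B → Dispersion N K) (x : B → Finset K → N × N → ℝ) (y : N × N → ℝ) : ℝ :=
  (∑ a ∈ A, c a * ∑ b, ∑ D ∈ Gset (disp b) a, x b D a) + ∑ a ∈ A, f a * y a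

/-- PA constraints. -/
def PAcons {B : Type} [Fintype B] (A : Finset (N × N)) (u : N × N → ℝ) (d : K → ℝ)
    (o s : K → N) (disp : B → Dispersion N K)
    (x : B → Finset K → N × N → ℝ) (y : N × N → ℝ) : Prop :=
  (∀ (b : B) (i : N),
    ∑ j ∈ univ.filter (fun j => (i, j) ∈ A), ∑ D ∈ Gset (disp b) (i, j), x b D (i, j)
      - ∑ j ∈ univ.filter (fun j => (j, i) ∈ A), ∑ D ∈ Gset (disp b) (j, i), x b D (j, i)
      = ∑ k ∈ (disp b).Kb,
          ((if o k = i then (1 : ℝ) else 0) - (if s k = i then 1 else 0)) * d k)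
  ∧ (∀ a ∈ A, ∑ b, ∑ D ∈ Gset (disp b) a, x b D a ≤ u a * y a)
  ∧ (∀ (b : B), ∀ a ∈ A, ∀ D ∈ Gset (disp b) a, x b D a ≤ (∑ k ∈ D, d k) * y a)
  ∧ (∀ b D a, 0 ≤ x b D a) ∧ (∀ a, 0 ≤ y a)

/-- Values of feasible points of the PA LP relaxation. -/
noncomputable def PAvals {B : Type} [Fintype B] (A : Finset (N × N)) (u : N × N → ℝ)
    (d : K → ℝ) (o s : K → N) (c f : N × N → ℝ) (disp : B → Dispersion N K) : Set ℝ :=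
  {v | ∃ x y, PAcons A u d o s disp x y ∧ (∀ a, y a ≤ 1) ∧ v = objPA A c f disp x y}

/-- The forward and backward labeling inequalities of the PAi formulation. -/
def PAilabel {B : Type} (A : Finset (N × N)) (d : K → ℝ) (o s : K → N)
    (disp : B → Dispersion N K) (x : B → Finset K → N × N → ℝ) : Prop :=
  ∀ (b : B), ∀ k ∈ (disp b).Kb, ∀ i : N,
    (∑ j ∈ univ.filter (fun j => (i, j) ∈ A),
        ∑ D ∈ (Gset (disp b) (i, j)).filter (fun D => k ∈ D), x b D (i, j)
      - ∑ j ∈ univ.filter (fun j => (j, i) ∈ A),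
        ∑ D ∈ (Gset (disp b) (j, i)).filter (fun D => D = {k}), x b D (j, i)
      ≥ ((if o k = i then (1 : ℝ) else 0) - (if s k = i then 1 else 0)) * d k)
    ∧ (∑ j ∈ univ.filter (fun j => (i, j) ∈ A),
        ∑ D ∈ (Gset (disp b) (i, j)).filter (fun D => D = {k}), x b D (i, j)
      - ∑ j ∈ univ.filter (fun j => (j, i) ∈ A),
        ∑ D ∈ (Gset (disp b) (j, i)).filter (fun D => k ∈ D), x b D (j, i)
      ≤ ((if o k = i then (1 : ℝ) else 0) - (if s k = i then 1 else 0)) * d k)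

/-- Values of feasible points of the PAi LP relaxation. -/
noncomputable def PAivals {B : Type} [Fintype B] (A : Finset (N × N)) (u : N × N → ℝ)
    (d : K → ℝ) (o s : K → N) (c f : N × N → ℝ) (disp : B → Dispersion N K) : Set ℝ :=
  {v | ∃ x y, PAcons A u d o s disp x y ∧ (∀ a, y a ≤ 1) ∧ PAilabel A d o s disp x
        ∧ v = objPA A c f disp x y}

/-- The PAe gadget equalities with nonnegative artificial-arc variables. -/
def PAegadget {B : Type} [Fintype B] (A : Finset (N × N)) (d : K → ℝ) (o s : K → N)
    (disp : B → Dispersion N K) (x : B → Finset K → N × N → ℝ)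
    (zin zout : B → N → Finset K → Finset K → ℝ) : Prop :=
  (∀ (b : B) (i : N), Lset A (disp b) i ≠ ∅ → ∀ D ∈ Mset A (disp b) i,
    (∑ j ∈ univ.filter (fun j => (i, j) ∈ A ∧ (D ∩ (disp b).Db (i, j)).Nonempty),
        x b D (i, j)
      - ∑ j ∈ univ.filter (fun j => (j, i) ∈ A ∧ (D ∩ (disp b).Db (j, i)).Nonempty),
        x b D (j, i))
    + (∑ C ∈ (Tout A (disp b) i).filter (fun C => (D ∩ C).Nonempty), zout b i D C
      - ∑ C ∈ (Tin A (disp b) i).filter (fun C => (C ∩ D).Nonempty), zin b i C D)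
    = ∑ k ∈ D, ((if o k = i then (1 : ℝ) else 0) - (if s k = i then 1 else 0)) * d k)
  ∧ (∀ (b : B) (i : N), Lset A (disp b) i ≠ ∅ → ∀ C ∈ Tin A (disp b) i,
    ∑ D ∈ (Mset A (disp b) i).filter (fun D => (C ∩ D).Nonempty), zin b i C D
      = ∑ j ∈ univ.filter (fun j => (j, i) ∈ A ∧ C = (disp b).Kb \ (disp b).Db (j, i)),
          x b C (j, i))
  ∧ (∀ (b : B) (i : N), Lset A (disp b) i ≠ ∅ → ∀ C ∈ Tout A (disp b) i,
    ∑ j ∈ univ.filter (fun j => (i, j) ∈ A ∧ C = (disp b).Kb \ (disp b).Db (i, j)),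
        x b C (i, j)
      = ∑ D ∈ (Mset A (disp b) i).filter (fun D => (C ∩ D).Nonempty), zout b i D C)
  ∧ (∀ b i C D, 0 ≤ zin b i C D ∧ 0 ≤ zout b i D C)

/-- Values of feasible points of the PAe LP relaxation. -/
noncomputable def PAevals {B : Type} [Fintype B] (A : Finset (N × N)) (u : N × N → ℝ)
    (d : K → ℝ) (o s : K → N) (c f : N × N → ℝ) (disp : B → Dispersion N K) : Set ℝ :=
  {v | ∃ x y zin zout, PAcons A u d o s disp x y ∧ (∀ a, y a ≤ 1)
        ∧ PAegadget A d o s disp x zin zout ∧ v = objPA A c f disp x y}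

/-- Values of feasible points of the FA LP relaxation (commodities aggregated by origin). -/
noncomputable def FAvals (A : Finset (N × N)) (u : N × N → ℝ) (d : K → ℝ) (o s : K → N)
    (c f : N × N → ℝ) : Set ℝ :=
  {v | ∃ (X : N → N × N → ℝ) (y : N × N → ℝ),
    (∀ (n : N) (i : N),
      ∑ j ∈ univ.filter (fun j => (i, j) ∈ A), X n (i, j)
        - ∑ j ∈ univ.filter (fun j => (j, i) ∈ A), X n (j, i)
        = ∑ k ∈ univ.filter (fun k : K => o k = n),
            ((if o k = i then (1 : ℝ) else 0) - (if s k = i then 1 else 0)) * d k)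
    ∧ (∀ a ∈ A, ∑ n : N, X n a ≤ u a * y a)
    ∧ (∀ (n : N), ∀ a ∈ A, X n a ≤ (∑ k ∈ univ.filter (fun k : K => o k = n), d k) * y a)
    ∧ (∀ n a, 0 ≤ X n a) ∧ (∀ a, 0 ≤ y a ∧ y a ≤ 1)
    ∧ v = (∑ a ∈ A, c a * ∑ n : N, X n a) + ∑ a ∈ A, f a * y a}

section AuxHelpers
set_option linter.unusedSectionVars false

variable {N K : Type} [Fintype N] [DecidableEq N] [DecidableEq K]

lemma aux_agg_notMem_image (b : Dispersion N K) (a : N × N) :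
    b.Kb \ b.Db a ∉ (b.Db a).image (fun k => ({k} : Finset K)) := by
  intro h
  obtain ⟨k, hk, he⟩ := Finset.mem_image.1 h
  have : k ∈ b.Kb \ b.Db a := by rw [← he]; exact Finset.mem_singleton_self k
  exact (Finset.mem_sdiff.1 this).2 hk

lemma aux_mem_Gset {b : Dispersion N K} {a : N × N} {D : Finset K} :
    D ∈ Gset b a ↔ (D = b.Kb \ b.Db a ∧ D ≠ ∅) ∨ (∃ k ∈ b.Db a, D = {k}) := by
  unfold Gset
  rw [Finset.mem_union, Finset.mem_image]
  constructor
  · rintro (h | ⟨k, hk, he⟩)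
    · by_cases he : b.Kb \ b.Db a = ∅
      · rw [he] at h; exact absurd h (Finset.notMem_empty D)
      · rw [if_neg he, Finset.mem_singleton] at h
        exact Or.inl ⟨h, by rw [h]; exact he⟩
    · exact Or.inr ⟨k, hk, he.symm⟩
  · rintro (⟨h1, h2⟩ | ⟨k, hk, he⟩)
    · left
      rw [if_neg (by rw [← h1]; exact h2), Finset.mem_singleton]
      exact h1
    · exact Or.inr ⟨k, hk, he.symm⟩

lemma aux_sum_Gset (b : Dispersion N K) (a : N × N) (g : K → ℝ) :
    ∑ D ∈ Gset b a, ∑ k ∈ D, g k = ∑ k ∈ b.Kb, g k := by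
  unfold Gset
  rw [Finset.sum_union]
  · rw [Finset.sum_image (fun k _ l _ h => Finset.singleton_injective h)]
    simp only [Finset.sum_singleton]
    by_cases h : b.Kb \ b.Db a = ∅
    · rw [if_pos h, Finset.sum_empty, zero_add]
      have hsub : b.Kb ⊆ b.Db a := by
        intro k hk
        by_contra hkk
        exact (Finset.notMem_empty k) (h ▸ Finset.mem_sdiff.2 ⟨hk, hkk⟩)
      exact Finset.sum_congr (Finset.Subset.antisymm (b.hDb a) hsub) (fun _ _ => rfl)
    · rw [if_neg h, Finset.sum_singleton]
      exact Finset.sum_sdiff (b.hDb a)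
  · by_cases h : b.Kb \ b.Db a = ∅
    · rw [if_pos h]; exact Finset.disjoint_empty_left _
    · rw [if_neg h, Finset.disjoint_singleton_left]
      exact aux_agg_notMem_image b a

lemma aux_Gset_filter_mem (b : Dispersion N K) (a : N × N) {k : K} (hk : k ∈ b.Kb) :
    (Gset b a).filter (fun D => k ∈ D)
      = {if k ∈ b.Db a then ({k} : Finset K) else b.Kb \ b.Db a} := by
  ext D
  rw [Finset.mem_filter, Finset.mem_singleton, aux_mem_Gset]
  by_cases hkd : k ∈ b.Db a
  · rw [if_pos hkd]
    constructor
    · rintro ⟨(⟨h1, _⟩ | ⟨k', hk', he⟩), hmem⟩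
      · rw [h1] at hmem; exact absurd ((Finset.mem_sdiff.1 hmem).2) (not_not.2 hkd)
      · rw [he] at hmem ⊢; rw [Finset.mem_singleton] at hmem; rw [hmem]
    · rintro rfl
      exact ⟨Or.inr ⟨k, hkd, rfl⟩, Finset.mem_singleton_self k⟩
  · rw [if_neg hkd]
    have hkagg : k ∈ b.Kb \ b.Db a := Finset.mem_sdiff.2 ⟨hk, hkd⟩
    constructor
    · rintro ⟨(⟨h1, _⟩ | ⟨k', hk', he⟩), hmem⟩
      · exact h1
      · rw [he, Finset.mem_singleton] at hmem
        exact absurd (hmem ▸ hk') hkd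
    · rintro rfl
      exact ⟨Or.inl ⟨rfl, fun h => (Finset.notMem_empty k) (h ▸ hkagg)⟩, hkagg⟩

lemma aux_Gset_filter_eqk (b : Dispersion N K) (a : N × N) (k : K) :
    (Gset b a).filter (fun D => D = {k})
      = if (k ∈ b.Db a ∨ b.Kb \ b.Db a = {k}) then {({k} : Finset K)} else ∅ := by
  ext D
  rw [Finset.mem_filter, aux_mem_Gset]
  by_cases hcond : k ∈ b.Db a ∨ b.Kb \ b.Db a = {k}
  · rw [if_pos hcond, Finset.mem_singleton]
    constructor
    · rintro ⟨_, rfl⟩; rfl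
    · rintro rfl
      rcases hcond with h | h
      · exact ⟨Or.inr ⟨k, h, rfl⟩, rfl⟩
      · exact ⟨Or.inl ⟨h.symm, Finset.singleton_ne_empty k⟩, rfl⟩
  · rw [if_neg hcond]
    constructor
    · rintro ⟨(⟨h1, _⟩ | ⟨k', hk', he⟩), rfl⟩
      · exact absurd (Or.inr h1.symm) hcond
      · obtain rfl := Finset.singleton_injective he
        exact absurd (Or.inl hk') hcond
    · intro h; exact absurd h (Finset.notMem_empty D)

end AuxHelpers
section AuxHelpers2
set_option linter.unusedSectionVars false
variable {N K : Type} [Fintype N] [DecidableEq N] [DecidableEq K]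

lemma aux_Lset_subset (A : Finset (N × N)) (b : Dispersion N K) (i : N) :
    Lset A b i ⊆ b.Kb := Finset.filter_subset _ _

lemma aux_Db_out_subset_Lset {A : Finset (N × N)} {b : Dispersion N K} {i j : N}
    (h : (i, j) ∈ A) : b.Db (i, j) ⊆ Lset A b i := by
  intro k hk
  exact Finset.mem_filter.2 ⟨b.hDb _ hk, Or.inr ⟨j, h, hk⟩⟩

lemma aux_Db_in_subset_Lset {A : Finset (N × N)} {b : Dispersion N K} {i j : N}
    (h : (j, i) ∈ A) : b.Db (j, i) ⊆ Lset A b i := by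
  intro k hk
  exact Finset.mem_filter.2 ⟨b.hDb _ hk, Or.inl ⟨j, h, hk⟩⟩

lemma aux_agg_notMem_Mimage (A : Finset (N × N)) (b : Dispersion N K) (i : N) :
    b.Kb \ Lset A b i ∉ (Lset A b i).image (fun k => ({k} : Finset K)) := by
  intro h
  obtain ⟨k, hk, he⟩ := Finset.mem_image.1 h
  have : k ∈ b.Kb \ Lset A b i := by rw [← he]; exact Finset.mem_singleton_self k
  exact (Finset.mem_sdiff.1 this).2 hk

lemma aux_mem_Mset {A : Finset (N × N)} {b : Dispersion N K} {i : N} {D : Finset K} :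
    D ∈ Mset A b i ↔ D = b.Kb \ Lset A b i ∨ ∃ k ∈ Lset A b i, D = {k} := by
  unfold Mset
  rw [Finset.mem_insert, Finset.mem_image]
  constructor
  · rintro (h | ⟨k, hk, he⟩)
    · exact Or.inl h
    · exact Or.inr ⟨k, hk, he.symm⟩
  · rintro (h | ⟨k, hk, he⟩)
    · exact Or.inl h
    · exact Or.inr ⟨k, hk, he.symm⟩

lemma aux_Mset_subset {A : Finset (N × N)} {b : Dispersion N K} {i : N} {D : Finset K}
    (h : D ∈ Mset A b i) : D ⊆ b.Kb := by
  rcases aux_mem_Mset.1 h with h | ⟨k, hk, rfl⟩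
  · rw [h]; exact Finset.sdiff_subset
  · rw [Finset.singleton_subset_iff]; exact aux_Lset_subset A b i hk

lemma aux_sum_Mset {A : Finset (N × N)} {b : Dispersion N K} {i : N} {C : Finset K}
    (hC : C ⊆ b.Kb) (g : K → ℝ) :
    ∑ D ∈ Mset A b i, ∑ k ∈ C ∩ D, g k = ∑ k ∈ C, g k := by
  unfold Mset
  rw [Finset.sum_insert (aux_agg_notMem_Mimage A b i),
    Finset.sum_image (fun k _ l _ h => Finset.singleton_injective h)]
  have h2 : ∀ k ∈ Lset A b i, ∑ m ∈ C ∩ {k}, g m = if k ∈ C then g k else 0 := by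
    intro k _
    by_cases h : k ∈ C
    · rw [if_pos h, Finset.inter_singleton_of_mem h, Finset.sum_singleton]
    · rw [if_neg h, Finset.inter_singleton_of_notMem h, Finset.sum_empty]
  rw [Finset.sum_congr rfl h2, ← Finset.sum_filter]
  have e1 : C ∩ (b.Kb \ Lset A b i) = C.filter (fun k => k ∉ Lset A b i) := by
    ext k
    simp only [Finset.mem_inter, Finset.mem_sdiff, Finset.mem_filter]
    exact ⟨fun ⟨h1, _, h3⟩ => ⟨h1, h3⟩, fun ⟨h1, h2⟩ => ⟨h1, hC h1, h2⟩⟩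
  have e2 : (Lset A b i).filter (fun k => k ∈ C) = C.filter (fun k => k ∈ Lset A b i) := by
    ext k
    simp only [Finset.mem_filter]
    exact ⟨fun ⟨h1, h2⟩ => ⟨h2, h1⟩, fun ⟨h1, h2⟩ => ⟨h2, h1⟩⟩
  rw [e1, e2, add_comm, Finset.sum_filter_add_sum_filter_not]

lemma aux_Mset_filter_mem {A : Finset (N × N)} {b : Dispersion N K} {i : N} {k : K}
    (hk : k ∈ b.Kb) :
    (Mset A b i).filter (fun D => k ∈ D)
      = {if k ∈ Lset A b i then ({k} : Finset K) else b.Kb \ Lset A b i} := by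
  ext D
  rw [Finset.mem_filter, Finset.mem_singleton, aux_mem_Mset]
  by_cases hkl : k ∈ Lset A b i
  · rw [if_pos hkl]
    constructor
    · rintro ⟨(h | ⟨k', hk', rfl⟩), hmem⟩
      · rw [h] at hmem; exact absurd hkl (Finset.mem_sdiff.1 hmem).2
      · rw [Finset.mem_singleton] at hmem; rw [hmem]
    · rintro rfl
      exact ⟨Or.inr ⟨k, hkl, rfl⟩, Finset.mem_singleton_self k⟩
  · rw [if_neg hkl]
    constructor
    · rintro ⟨(h | ⟨k', hk', rfl⟩), hmem⟩
      · exact h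
      · rw [Finset.mem_singleton] at hmem
        exact absurd (hmem ▸ hk') hkl
    · rintro rfl
      exact ⟨Or.inl rfl, Finset.mem_sdiff.2 ⟨hk, hkl⟩⟩

lemma aux_mem_Tout {A : Finset (N × N)} {b : Dispersion N K} {i : N} {C : Finset K} :
    C ∈ Tout A b i ↔ (∃ j, (i, j) ∈ A ∧ C = b.Kb \ b.Db (i, j)) ∧ C ≠ ∅ := by
  unfold Tout
  simp only [Finset.mem_filter, Finset.mem_image, Finset.mem_univ, true_and]
  constructor
  · rintro ⟨⟨j, hj, he⟩, hne⟩; exact ⟨⟨j, hj, he.symm⟩, hne⟩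
  · rintro ⟨⟨j, hj, he⟩, hne⟩; exact ⟨⟨j, hj, he.symm⟩, hne⟩

lemma aux_mem_Tin {A : Finset (N × N)} {b : Dispersion N K} {i : N} {C : Finset K} :
    C ∈ Tin A b i ↔ (∃ j, (j, i) ∈ A ∧ C = b.Kb \ b.Db (j, i)) ∧ C ≠ ∅ := by
  unfold Tin
  simp only [Finset.mem_filter, Finset.mem_image, Finset.mem_univ, true_and]
  constructor
  · rintro ⟨⟨j, hj, he⟩, hne⟩; exact ⟨⟨j, hj, he.symm⟩, hne⟩
  · rintro ⟨⟨j, hj, he⟩, hne⟩; exact ⟨⟨j, hj, he.symm⟩, hne⟩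

/-- Master grouping lemma. -/
lemma aux_sum_group (s : Finset N) (g : N → Finset K) (F : N → Finset K → ℝ)
    (p : Finset K → Prop) [DecidablePred p] :
    ∑ C ∈ ((s.image g).filter (fun C => C ≠ ∅)).filter p,
        ∑ j ∈ s.filter (fun j => C = g j), F j C
      = ∑ j ∈ s.filter (fun j => g j ≠ ∅ ∧ p (g j)), F j (g j) := by
  classical
  have h1 : ∀ C ∈ ((s.image g).filter (fun C => C ≠ ∅)).filter p,
      ∑ j ∈ s.filter (fun j => C = g j), F j C
        = ∑ j ∈ (s.filter (fun j => g j ≠ ∅ ∧ p (g j))).filter (fun j => g j = C),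
            F j (g j) := by
    intro C hC
    rw [Finset.mem_filter, Finset.mem_filter] at hC
    obtain ⟨⟨_, hne⟩, hp⟩ := hC
    apply Finset.sum_congr
    · ext j
      simp only [Finset.mem_filter]
      constructor
      · rintro ⟨hj, rfl⟩
        exact ⟨⟨hj, hne, hp⟩, rfl⟩
      · rintro ⟨⟨hj, _⟩, he⟩
        exact ⟨hj, he.symm⟩
    · intro j hj
      rw [Finset.mem_filter] at hj
      rw [hj.2]
  rw [Finset.sum_congr rfl h1]
  apply Finset.sum_fiberwise_of_maps_to
  intro j hj
  rw [Finset.mem_filter] at hj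
  rw [Finset.mem_filter, Finset.mem_filter]
  exact ⟨⟨Finset.mem_image_of_mem g hj.1, hj.2.1⟩, hj.2.2⟩

end AuxHelpers2
section AuxHelpers3
set_option linter.unusedSectionVars false
set_option linter.unnecessarySeqFocus false
variable {N K : Type} [Fintype N] [DecidableEq N] [DecidableEq K] [Fintype K]

lemma aux_sum_disp {B : Type} [Fintype B] (disp : B → Dispersion N K)
    (hcov : ∀ k : K, ∃! b : B, k ∈ (disp b).Kb) (g : K → ℝ) :
    ∑ b, ∑ k ∈ (disp b).Kb, g k = ∑ k : K, g k := by
  have h : ∀ b : B, ∑ k ∈ (disp b).Kb, g k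
      = ∑ k : K, if k ∈ (disp b).Kb then g k else 0 := by
    intro b
    rw [Finset.sum_ite_mem, Finset.univ_inter]
  rw [Finset.sum_congr rfl (fun b _ => h b), Finset.sum_comm]
  apply Finset.sum_congr rfl
  intro k _
  obtain ⟨b0, hb0, huniq⟩ := hcov k
  rw [Finset.sum_eq_single_of_mem b0 (Finset.mem_univ b0)]
  · rw [if_pos hb0]
  · intro b _ hne
    rw [if_neg (fun h => hne (huniq b h))]

lemma aux_sum_disp_orig {B : Type} [Fintype B] (disp : B → Dispersion N K)
    (hcov : ∀ k : K, ∃! b : B, k ∈ (disp b).Kb)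
    (o : K → N) (horig : ∀ b : B, ∀ k ∈ (disp b).Kb, o k = (disp b).ob)
    (n : N) (g : K → ℝ) :
    ∑ b ∈ univ.filter (fun b => (disp b).ob = n), ∑ k ∈ (disp b).Kb, g k
      = ∑ k ∈ univ.filter (fun k => o k = n), g k := by
  rw [Finset.sum_filter, Finset.sum_filter]
  have h : ∀ b : B, (if (disp b).ob = n then ∑ k ∈ (disp b).Kb, g k else 0)
      = ∑ k ∈ (disp b).Kb, if o k = n then g k else 0 := by
    intro b
    by_cases hb : (disp b).ob = n
    · rw [if_pos hb]
      apply Finset.sum_congr rfl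
      intro k hk
      rw [if_pos (by rw [horig b k hk, hb])]
    · rw [if_neg hb]
      rw [eq_comm]
      apply Finset.sum_eq_zero
      intro k hk
      rw [if_neg (by rw [horig b k hk]; exact hb)]
  rw [Finset.sum_congr rfl (fun b _ => h b)]
  exact aux_sum_disp disp hcov _

lemma aux_PA_val_nonneg {B : Type} [Fintype B] {A : Finset (N × N)} {u : N × N → ℝ}
    {d : K → ℝ} {o s : K → N} {c f : N × N → ℝ} {disp : B → Dispersion N K}
    (hc : ∀ a, 0 ≤ c a) (hf : ∀ a, 0 ≤ f a) :
    ∀ v ∈ PAvals A u d o s c f disp, (0:ℝ) ≤ v := by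
  rintro v ⟨x, y, hcons, _, rfl⟩
  unfold objPA
  have h1 : (0:ℝ) ≤ ∑ a ∈ A, c a * ∑ b, ∑ D ∈ Gset (disp b) a, x b D a := by
    apply Finset.sum_nonneg
    intro a _
    exact mul_nonneg (hc a) (Finset.sum_nonneg fun b _ =>
      Finset.sum_nonneg fun D _ => hcons.2.2.2.1 b D a)
  have h2 : (0:ℝ) ≤ ∑ a ∈ A, f a * y a :=
    Finset.sum_nonneg fun a _ => mul_nonneg (hf a) (hcons.2.2.2.2 a)
  linarith

lemma aux_FA_val_nonneg {A : Finset (N × N)} {u : N × N → ℝ}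
    {d : K → ℝ} {o s : K → N} {c f : N × N → ℝ}
    (hc : ∀ a, 0 ≤ c a) (hf : ∀ a, 0 ≤ f a) :
    ∀ v ∈ FAvals A u d o s c f, (0:ℝ) ≤ v := by
  rintro v ⟨X, y, _, _, _, hX0, hy, rfl⟩
  have h1 : (0:ℝ) ≤ ∑ a ∈ A, c a * ∑ n : N, X n a :=
    Finset.sum_nonneg fun a _ => mul_nonneg (hc a)
      (Finset.sum_nonneg fun n _ => hX0 n a)
  have h2 : (0:ℝ) ≤ ∑ a ∈ A, f a * y a :=
    Finset.sum_nonneg fun a _ => mul_nonneg (hf a) (hy a).1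
  linarith

lemma aux_PAi_sub_PA {B : Type} [Fintype B] (A : Finset (N × N)) (u : N × N → ℝ)
    (d : K → ℝ) (o s : K → N) (c f : N × N → ℝ) (disp : B → Dispersion N K) :
    PAivals A u d o s c f disp ⊆ PAvals A u d o s c f disp := by
  rintro v ⟨x, y, hcons, hy1, _, rfl⟩
  exact ⟨x, y, hcons, hy1, rfl⟩

lemma aux_MIP_sub_DA (A : Finset (N × N)) (u : N × N → ℝ)
    (d : K → ℝ) (o s : K → N) (c f : N × N → ℝ) :
    MIPvals A u d o s c f ⊆ DAvals A u d o s c f := by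
  rintro v ⟨x, y, hcons, hy01, rfl⟩
  refine ⟨x, y, hcons, fun a => ?_, rfl⟩
  rcases hy01 a with h | h <;> rw [h] <;> norm_num

lemma aux_PA_sub_FA {B : Type} [Fintype B] (A : Finset (N × N)) (u : N × N → ℝ)
    (d : K → ℝ) (o s : K → N) (c f : N × N → ℝ) (disp : B → Dispersion N K)
    (hcov : ∀ k : K, ∃! b : B, k ∈ (disp b).Kb)
    (horig : ∀ b : B, ∀ k ∈ (disp b).Kb, o k = (disp b).ob) :
    PAvals A u d o s c f disp ⊆ FAvals A u d o s c f := by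
  rintro v ⟨x, y, hcons, hy1, rfl⟩
  obtain ⟨hflow, hcap, hstr, hx0, hy0⟩ := hcons
  set X : N → N × N → ℝ := fun n a =>
    ∑ b ∈ univ.filter (fun b => (disp b).ob = n), ∑ D ∈ Gset (disp b) a, x b D a with hXdef
  have hXsum : ∀ a, ∑ n : N, X n a = ∑ b, ∑ D ∈ Gset (disp b) a, x b D a := by
    intro a
    exact Finset.sum_fiberwise_of_maps_to (fun b _ => Finset.mem_univ _) _
  refine ⟨X, y, ?_, ?_, ?_, ?_, fun a => ⟨hy0 a, hy1 a⟩, ?_⟩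
  · intro n i
    have : ∑ j ∈ univ.filter (fun j => (i, j) ∈ A), X n (i, j)
        - ∑ j ∈ univ.filter (fun j => (j, i) ∈ A), X n (j, i)
        = ∑ b ∈ univ.filter (fun b => (disp b).ob = n),
            (∑ j ∈ univ.filter (fun j => (i, j) ∈ A), ∑ D ∈ Gset (disp b) (i, j), x b D (i, j)
             - ∑ j ∈ univ.filter (fun j => (j, i) ∈ A), ∑ D ∈ Gset (disp b) (j, i), x b D (j, i)) := by
      rw [Finset.sum_sub_distrib, hXdef]
      simp only []
      rw [Finset.sum_comm, Finset.sum_comm (s := univ.filter (fun j => (j, i) ∈ A))]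
    rw [this, Finset.sum_congr rfl (fun b _ => hflow b i)]
    exact aux_sum_disp_orig disp hcov o horig n _
  · intro a ha
    rw [hXsum a]
    exact hcap a ha
  · intro n a ha
    have h1 : X n a ≤ ∑ b ∈ univ.filter (fun b => (disp b).ob = n),
        ∑ D ∈ Gset (disp b) a, (∑ k ∈ D, d k) * y a := by
      apply Finset.sum_le_sum
      intro b _
      exact Finset.sum_le_sum (fun D hD => hstr b a ha D hD)
    have h2 : ∑ b ∈ univ.filter (fun b => (disp b).ob = n),
        ∑ D ∈ Gset (disp b) a, (∑ k ∈ D, d k) * y a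
        = (∑ k ∈ univ.filter (fun k : K => o k = n), d k) * y a := by
      rw [← aux_sum_disp_orig disp hcov o horig n d, Finset.sum_mul]
      apply Finset.sum_congr rfl
      intro b _
      rw [← Finset.sum_mul, ← aux_sum_Gset (disp b) a d]
    exact h1.trans (le_of_eq h2)
  · intro n a
    exact Finset.sum_nonneg fun b _ => Finset.sum_nonneg fun D _ => hx0 b D a
  · unfold objPA
    congr 1
    apply Finset.sum_congr rfl
    intro a _
    rw [hXsum a]

end AuxHelpers3
section AuxHelpers4
set_option linter.unusedSectionVars false
set_option maxHeartbeats 1000000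
variable {N K : Type} [Fintype N] [DecidableEq N] [DecidableEq K] [Fintype K]

lemma aux_DA_sub_PAe {B : Type} [Fintype B] (A : Finset (N × N)) (u : N × N → ℝ)
    (d : K → ℝ) (o s : K → N) (c f : N × N → ℝ) (disp : B → Dispersion N K)
    (hcov : ∀ k : K, ∃! b : B, k ∈ (disp b).Kb) :
    DAvals A u d o s c f ⊆ PAevals A u d o s c f disp := by
  rintro v ⟨x, y, hcons, hy1, rfl⟩
  obtain ⟨hflow, hcap, hstr, hx0, hy0⟩ := hcons
  set xh : B → Finset K → N × N → ℝ := fun b D a => ∑ k ∈ D, x k a with hxh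
  set zin : B → N → Finset K → Finset K → ℝ := fun b i C D =>
    ∑ j ∈ univ.filter (fun j => (j, i) ∈ A ∧ C = (disp b).Kb \ (disp b).Db (j, i)),
      ∑ k ∈ C ∩ D, x k (j, i) with hzin
  set zout : B → N → Finset K → Finset K → ℝ := fun b i D C =>
    ∑ j ∈ univ.filter (fun j => (i, j) ∈ A ∧ C = (disp b).Kb \ (disp b).Db (i, j)),
      ∑ k ∈ D ∩ C, x k (i, j) with hzout
  have hxhsum : ∀ b a, ∑ D ∈ Gset (disp b) a, xh b D a = ∑ k ∈ (disp b).Kb, x k a := by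
    intro b a
    simp only [hxh]
    exact aux_sum_Gset (disp b) a _
  have hagg : ∀ a, ∑ b, ∑ D ∈ Gset (disp b) a, xh b D a = ∑ k : K, x k a := by
    intro a
    rw [Finset.sum_congr rfl (fun b _ => hxhsum b a)]
    exact aux_sum_disp disp hcov _
  refine ⟨xh, y, zin, zout, ⟨?_, ?_, ?_, ?_, hy0⟩, hy1, ⟨?_, ?_, ?_, ?_⟩, ?_⟩
  · -- flow conservation
    intro b i
    rw [Finset.sum_congr rfl (fun j _ => hxhsum b (i, j)),
      Finset.sum_congr rfl (fun j _ => hxhsum b (j, i)),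
      Finset.sum_comm, Finset.sum_comm (s := univ.filter (fun j => (j, i) ∈ A)),
      ← Finset.sum_sub_distrib]
    exact Finset.sum_congr rfl fun k _ => hflow k i
  · -- capacity
    intro a ha
    rw [hagg a]
    exact hcap a ha
  · -- strong
    intro b a ha D _
    simp only [hxh]
    rw [Finset.sum_mul]
    exact Finset.sum_le_sum fun k _ => hstr k a ha
  · -- nonneg
    intro b D a
    exact Finset.sum_nonneg fun k _ => hx0 k a
  · -- gadget eq1
    intro b i hL D hD
    have hDK : D ⊆ (disp b).Kb := aux_Mset_subset hD
    have hDg : ∀ (a : N × N), D ∩ ((disp b).Kb \ (disp b).Db a) = D \ (disp b).Db a := by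
      intro a
      ext k
      simp only [Finset.mem_inter, Finset.mem_sdiff]
      exact ⟨fun ⟨h1, _, h3⟩ => ⟨h1, h3⟩, fun ⟨h1, h2⟩ => ⟨h1, hDK h1, h2⟩⟩
    have hDg' : ∀ (a : N × N), ((disp b).Kb \ (disp b).Db a) ∩ D = D \ (disp b).Db a := by
      intro a
      rw [Finset.inter_comm]
      exact hDg a
    have hdich : ∀ (a : N × N) (hsub : (disp b).Db a ⊆ Lset A (disp b) i),
        (D ∩ (disp b).Db a).Nonempty → D ⊆ (disp b).Db a := by
      intro a hsub hne
      rcases aux_mem_Mset.1 hD with h | ⟨k', hk', rfl⟩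
      · exfalso
        obtain ⟨k, hk⟩ := hne
        rw [h, Finset.mem_inter, Finset.mem_sdiff] at hk
        exact hk.1.2 (hsub hk.2)
      · obtain ⟨k, hk⟩ := hne
        rw [Finset.mem_inter, Finset.mem_singleton] at hk
        rw [Finset.singleton_subset_iff]
        exact hk.1 ▸ hk.2
    -- term 1
    have hterm1 : ∑ j ∈ univ.filter (fun j => (i, j) ∈ A ∧ (D ∩ (disp b).Db (i, j)).Nonempty),
          xh b D (i, j)
        = ∑ j ∈ univ.filter (fun j => (i, j) ∈ A), ∑ k ∈ D ∩ (disp b).Db (i, j), x k (i, j) := by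
      have hside : ∀ j ∈ univ.filter (fun j => (i, j) ∈ A),
          (∑ k ∈ D ∩ (disp b).Db (i, j), x k (i, j)) ≠ 0
            → (D ∩ (disp b).Db (i, j)).Nonempty := by
        intro j _ hne
        by_contra hne2
        rw [Finset.not_nonempty_iff_eq_empty] at hne2
        rw [hne2, Finset.sum_empty] at hne
        exact hne rfl
      rw [← Finset.sum_filter_of_ne hside, Finset.filter_filter]
      apply Finset.sum_congr rfl
      intro j hj
      rw [Finset.mem_filter] at hj
      have hsub : D ⊆ (disp b).Db (i, j) :=
        hdich (i, j) (aux_Db_out_subset_Lset hj.2.1) hj.2.2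
      simp only [hxh]
      rw [Finset.inter_eq_left.2 hsub]
    have hterm2 : ∑ j ∈ univ.filter (fun j => (j, i) ∈ A ∧ (D ∩ (disp b).Db (j, i)).Nonempty),
          xh b D (j, i)
        = ∑ j ∈ univ.filter (fun j => (j, i) ∈ A), ∑ k ∈ D ∩ (disp b).Db (j, i), x k (j, i) := by
      have hside : ∀ j ∈ univ.filter (fun j => (j, i) ∈ A),
          (∑ k ∈ D ∩ (disp b).Db (j, i), x k (j, i)) ≠ 0
            → (D ∩ (disp b).Db (j, i)).Nonempty := by
        intro j _ hne
        by_contra hne2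
        rw [Finset.not_nonempty_iff_eq_empty] at hne2
        rw [hne2, Finset.sum_empty] at hne
        exact hne rfl
      rw [← Finset.sum_filter_of_ne hside, Finset.filter_filter]
      apply Finset.sum_congr rfl
      intro j hj
      rw [Finset.mem_filter] at hj
      have hsub : D ⊆ (disp b).Db (j, i) :=
        hdich (j, i) (aux_Db_in_subset_Lset hj.2.1) hj.2.2
      simp only [hxh]
      rw [Finset.inter_eq_left.2 hsub]
    -- term 3
    have hterm3 : ∑ C ∈ (Tout A (disp b) i).filter (fun C => (D ∩ C).Nonempty), zout b i D C
        = ∑ j ∈ univ.filter (fun j => (i, j) ∈ A), ∑ k ∈ D \ (disp b).Db (i, j), x k (i, j) := by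
      simp only [hzout]
      have e1 : ∀ C, univ.filter (fun j => (i, j) ∈ A ∧ C = (disp b).Kb \ (disp b).Db (i, j))
          = (univ.filter (fun j => (i, j) ∈ A)).filter
              (fun j => C = (disp b).Kb \ (disp b).Db (i, j)) := by
        intro C
        rw [Finset.filter_filter]
      rw [Finset.sum_congr rfl (fun C _ => by rw [e1 C])]
      unfold Tout
      rw [aux_sum_group (univ.filter (fun j => (i, j) ∈ A))
        (fun j => (disp b).Kb \ (disp b).Db (i, j))
        (fun j C => ∑ k ∈ D ∩ C, x k (i, j)) (fun C => (D ∩ C).Nonempty)]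
      have hside : ∀ j ∈ univ.filter (fun j => (i, j) ∈ A),
          (∑ k ∈ D ∩ ((disp b).Kb \ (disp b).Db (i, j)), x k (i, j)) ≠ 0
            → (disp b).Kb \ (disp b).Db (i, j) ≠ ∅
              ∧ (D ∩ ((disp b).Kb \ (disp b).Db (i, j))).Nonempty := by
        intro j _ hne
        constructor
        · intro h0
          rw [h0, Finset.inter_empty, Finset.sum_empty] at hne
          exact hne rfl
        · by_contra hne2
          rw [Finset.not_nonempty_iff_eq_empty] at hne2
          rw [hne2, Finset.sum_empty] at hne
          exact hne rfl
      rw [Finset.sum_filter_of_ne hside]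
      apply Finset.sum_congr rfl
      intro j _
      rw [hDg (i, j)]
    have hterm4 : ∑ C ∈ (Tin A (disp b) i).filter (fun C => (C ∩ D).Nonempty), zin b i C D
        = ∑ j ∈ univ.filter (fun j => (j, i) ∈ A), ∑ k ∈ D \ (disp b).Db (j, i), x k (j, i) := by
      simp only [hzin]
      have e1 : ∀ C, univ.filter (fun j => (j, i) ∈ A ∧ C = (disp b).Kb \ (disp b).Db (j, i))
          = (univ.filter (fun j => (j, i) ∈ A)).filter
              (fun j => C = (disp b).Kb \ (disp b).Db (j, i)) := by
        intro C
        rw [Finset.filter_filter]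
      rw [Finset.sum_congr rfl (fun C _ => by rw [e1 C])]
      unfold Tin
      rw [aux_sum_group (univ.filter (fun j => (j, i) ∈ A))
        (fun j => (disp b).Kb \ (disp b).Db (j, i))
        (fun j C => ∑ k ∈ C ∩ D, x k (j, i)) (fun C => (C ∩ D).Nonempty)]
      have hside : ∀ j ∈ univ.filter (fun j => (j, i) ∈ A),
          (∑ k ∈ ((disp b).Kb \ (disp b).Db (j, i)) ∩ D, x k (j, i)) ≠ 0
            → (disp b).Kb \ (disp b).Db (j, i) ≠ ∅
              ∧ (((disp b).Kb \ (disp b).Db (j, i)) ∩ D).Nonempty := by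
        intro j _ hne
        constructor
        · intro h0
          rw [h0, Finset.empty_inter, Finset.sum_empty] at hne
          exact hne rfl
        · by_contra hne2
          rw [Finset.not_nonempty_iff_eq_empty] at hne2
          rw [hne2, Finset.sum_empty] at hne
          exact hne rfl
      rw [Finset.sum_filter_of_ne hside]
      apply Finset.sum_congr rfl
      intro j _
      rw [hDg' (j, i)]
    rw [hterm1, hterm2, hterm3, hterm4]
    have hcombout : ∑ j ∈ univ.filter (fun j => (i, j) ∈ A), ∑ k ∈ D ∩ (disp b).Db (i, j), x k (i, j)
        + ∑ j ∈ univ.filter (fun j => (i, j) ∈ A), ∑ k ∈ D \ (disp b).Db (i, j), x k (i, j)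
        = ∑ j ∈ univ.filter (fun j => (i, j) ∈ A), ∑ k ∈ D, x k (i, j) := by
      rw [← Finset.sum_add_distrib]
      exact Finset.sum_congr rfl fun j _ => Finset.sum_inter_add_sum_sdiff D ((disp b).Db (i, j)) _
    have hcombin : ∑ j ∈ univ.filter (fun j => (j, i) ∈ A), ∑ k ∈ D ∩ (disp b).Db (j, i), x k (j, i)
        + ∑ j ∈ univ.filter (fun j => (j, i) ∈ A), ∑ k ∈ D \ (disp b).Db (j, i), x k (j, i)
        = ∑ j ∈ univ.filter (fun j => (j, i) ∈ A), ∑ k ∈ D, x k (j, i) := by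
      rw [← Finset.sum_add_distrib]
      exact Finset.sum_congr rfl fun j _ => Finset.sum_inter_add_sum_sdiff D ((disp b).Db (j, i)) _
    have hfinal : ∑ j ∈ univ.filter (fun j => (i, j) ∈ A), ∑ k ∈ D, x k (i, j)
        - ∑ j ∈ univ.filter (fun j => (j, i) ∈ A), ∑ k ∈ D, x k (j, i)
        = ∑ k ∈ D, ((if o k = i then (1 : ℝ) else 0) - (if s k = i then 1 else 0)) * d k := by
      rw [Finset.sum_comm, Finset.sum_comm (s := univ.filter (fun j => (j, i) ∈ A)),
        ← Finset.sum_sub_distrib]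
      exact Finset.sum_congr rfl fun k _ => hflow k i
    linarith
  · -- gadget eq2
    intro b i hL C hC
    obtain ⟨⟨j0, hj0, hCe⟩, hCne⟩ := aux_mem_Tin.1 hC
    have hCK : C ⊆ (disp b).Kb := by
      rw [hCe]
      exact Finset.sdiff_subset
    simp only [hzin]
    rw [Finset.sum_comm]
    apply Finset.sum_congr rfl
    intro j _
    have hside : ∀ D ∈ Mset A (disp b) i,
        (∑ k ∈ C ∩ D, x k (j, i)) ≠ 0 → (C ∩ D).Nonempty := by
      intro D _ hne
      by_contra hne2
      rw [Finset.not_nonempty_iff_eq_empty] at hne2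
      rw [hne2, Finset.sum_empty] at hne
      exact hne rfl
    rw [Finset.sum_filter_of_ne hside]
    simp only [hxh]
    exact aux_sum_Mset hCK _
  · -- gadget eq3
    intro b i hL C hC
    obtain ⟨⟨j0, hj0, hCe⟩, hCne⟩ := aux_mem_Tout.1 hC
    have hCK : C ⊆ (disp b).Kb := by
      rw [hCe]
      exact Finset.sdiff_subset
    simp only [hzout]
    rw [eq_comm, Finset.sum_comm]
    apply Finset.sum_congr rfl
    intro j _
    have hside : ∀ D ∈ Mset A (disp b) i,
        (∑ k ∈ D ∩ C, x k (i, j)) ≠ 0 → (C ∩ D).Nonempty := by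
      intro D _ hne
      rw [Finset.inter_comm]
      by_contra hne2
      rw [Finset.not_nonempty_iff_eq_empty] at hne2
      rw [hne2, Finset.sum_empty] at hne
      exact hne rfl
    rw [Finset.sum_filter_of_ne hside]
    have e2 : ∀ D, ∑ k ∈ D ∩ C, x k (i, j) = ∑ k ∈ C ∩ D, x k (i, j) := by
      intro D
      rw [Finset.inter_comm]
    rw [Finset.sum_congr rfl (fun D _ => e2 D)]
    simp only [hxh]
    exact aux_sum_Mset hCK _
  · -- z nonneg
    intro b i C D
    constructor
    · exact Finset.sum_nonneg fun j _ => Finset.sum_nonneg fun k _ => hx0 k _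
    · exact Finset.sum_nonneg fun j _ => Finset.sum_nonneg fun k _ => hx0 k _
  · -- objective
    unfold objPA objDA
    congr 1
    apply Finset.sum_congr rfl
    intro a _
    rw [hagg a]

end AuxHelpers4
section AuxHelpers5
set_option linter.unusedSectionVars false
variable {N K : Type} [Fintype N] [DecidableEq N] [DecidableEq K]

lemma aux_sum_ite_filter (P Q : N → Prop) [DecidablePred P] [DecidablePred Q] (F : N → ℝ) :
    ∑ j ∈ univ.filter (fun j => P j ∧ Q j), F j
      = ∑ j ∈ univ.filter P, (if Q j then F j else 0) := by
  rw [← Finset.filter_filter, Finset.sum_filter]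

lemma aux_Tout_group (A : Finset (N × N)) (b : Dispersion N K) (i : N) (k : K)
    (F : N → Finset K → ℝ) :
    ∑ C ∈ (Tout A b i).filter (fun C => k ∈ C),
        ∑ j ∈ univ.filter (fun j => (i, j) ∈ A ∧ C = b.Kb \ b.Db (i, j)), F j C
      = ∑ j ∈ univ.filter (fun j => (i, j) ∈ A ∧ k ∈ b.Kb \ b.Db (i, j)),
          F j (b.Kb \ b.Db (i, j)) := by
  have e1 : ∀ C : Finset K, univ.filter (fun j => (i, j) ∈ A ∧ C = b.Kb \ b.Db (i, j))
      = (univ.filter (fun j => (i, j) ∈ A)).filter (fun j => C = b.Kb \ b.Db (i, j)) :=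
    fun C => by rw [Finset.filter_filter]
  rw [Finset.sum_congr rfl (fun C _ => by rw [e1 C])]
  unfold Tout
  rw [aux_sum_group (univ.filter (fun j => (i, j) ∈ A)) (fun j => b.Kb \ b.Db (i, j)) F
    (fun C => k ∈ C)]
  rw [Finset.filter_filter]
  apply Finset.sum_congr _ (fun j _ => rfl)
  apply Finset.filter_congr
  intro j _
  constructor
  · rintro ⟨h1, _, h3⟩
    exact ⟨h1, h3⟩
  · rintro ⟨h1, h2⟩
    exact ⟨h1, fun h0 => (Finset.notMem_empty k) (h0 ▸ h2), h2⟩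

lemma aux_Tin_group (A : Finset (N × N)) (b : Dispersion N K) (i : N) (k : K)
    (F : N → Finset K → ℝ) :
    ∑ C ∈ (Tin A b i).filter (fun C => k ∈ C),
        ∑ j ∈ univ.filter (fun j => (j, i) ∈ A ∧ C = b.Kb \ b.Db (j, i)), F j C
      = ∑ j ∈ univ.filter (fun j => (j, i) ∈ A ∧ k ∈ b.Kb \ b.Db (j, i)),
          F j (b.Kb \ b.Db (j, i)) := by
  have e1 : ∀ C : Finset K, univ.filter (fun j => (j, i) ∈ A ∧ C = b.Kb \ b.Db (j, i))
      = (univ.filter (fun j => (j, i) ∈ A)).filter (fun j => C = b.Kb \ b.Db (j, i)) :=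
    fun C => by rw [Finset.filter_filter]
  rw [Finset.sum_congr rfl (fun C _ => by rw [e1 C])]
  unfold Tin
  rw [aux_sum_group (univ.filter (fun j => (j, i) ∈ A)) (fun j => b.Kb \ b.Db (j, i)) F
    (fun C => k ∈ C)]
  rw [Finset.filter_filter]
  apply Finset.sum_congr _ (fun j _ => rfl)
  apply Finset.filter_congr
  intro j _
  constructor
  · rintro ⟨h1, _, h3⟩
    exact ⟨h1, h3⟩
  · rintro ⟨h1, h2⟩
    exact ⟨h1, fun h0 => (Finset.notMem_empty k) (h0 ▸ h2), h2⟩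

lemma aux_singleton_inter_nonempty {k : K} {s : Finset K} :
    (({k} : Finset K) ∩ s).Nonempty ↔ k ∈ s := by
  constructor
  · rintro ⟨a, ha⟩
    rw [Finset.mem_inter, Finset.mem_singleton] at ha
    exact ha.1 ▸ ha.2
  · intro h
    exact ⟨k, Finset.mem_inter.2 ⟨Finset.mem_singleton_self k, h⟩⟩

lemma aux_ite_or (P Q : Prop) [Decidable P] [Decidable Q] (u : ℝ) (h : ¬ (P ∧ Q)) :
    (if P ∨ Q then u else 0) = (if P then u else 0) + (if Q then u else 0) := by
  by_cases hP : P
  · rw [if_pos (Or.inl hP), if_pos hP, if_neg (fun hQ => h ⟨hP, hQ⟩), add_zero]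
  · by_cases hQ : Q
    · rw [if_pos (Or.inr hQ), if_neg hP, if_pos hQ, zero_add]
    · rw [if_neg (fun h' => h'.elim hP hQ), if_neg hP, if_neg hQ, add_zero]

lemma aux_ite_split (P : Prop) [Decidable P] (u v : ℝ) :
    (if P then u else v) = (if P then u else 0) + (if P then 0 else v) := by
  by_cases hP : P
  · rw [if_pos hP, if_pos hP, if_pos hP, add_zero]
  · rw [if_neg hP, if_neg hP, if_neg hP, zero_add]

lemma aux_singleton_mem_Mset {A : Finset (N × N)} {b : Dispersion N K} {i : N} {k : K}
    (hk : k ∈ Lset A b i) : ({k} : Finset K) ∈ Mset A b i :=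
  aux_mem_Mset.2 (Or.inr ⟨k, hk, rfl⟩)

lemma aux_agg_mem_Mset (A : Finset (N × N)) (b : Dispersion N K) (i : N) :
    b.Kb \ Lset A b i ∈ Mset A b i :=
  aux_mem_Mset.2 (Or.inl rfl)

end AuxHelpers5
section AuxHelpers6
set_option linter.unusedSectionVars false
set_option maxHeartbeats 2000000
variable {N K : Type} [Fintype N] [DecidableEq N] [DecidableEq K] [Fintype K]

lemma aux_PAe_sub_PAi {B : Type} [Fintype B] (A : Finset (N × N)) (u : N × N → ℝ)
    (d : K → ℝ) (o s : K → N) (c f : N × N → ℝ) (disp : B → Dispersion N K)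
    (horig : ∀ b : B, ∀ k ∈ (disp b).Kb, o k = (disp b).ob)
    (hd : ∀ k, 0 ≤ d k) :
    PAevals A u d o s c f disp ⊆ PAivals A u d o s c f disp := by
  rintro v ⟨x, y, zin, zout, hcons, hy1, hgad, rfl⟩
  obtain ⟨heq1, heq2, heq3, hz0⟩ := hgad
  refine ⟨x, y, hcons, hy1, ?_, rfl⟩
  obtain ⟨hflow, hcap, hstr, hx0, hy0⟩ := hcons
  intro b k hk i
  set r : K → ℝ :=
    fun k' => ((if o k' = i then (1 : ℝ) else 0) - (if s k' = i then 1 else 0)) * d k' with hr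
  have hgoalr : ((if o k = i then (1 : ℝ) else 0) - (if s k = i then 1 else 0)) * d k
      = r k := by simp only [hr]
  have hsumr : ∀ T : Finset K,
      ∑ k' ∈ T, ((if o k' = i then (1 : ℝ) else 0) - (if s k' = i then 1 else 0)) * d k'
        = ∑ k' ∈ T, r k' := fun T => by simp only [hr]
  have hrnn : ∀ k', o k' = i → 0 ≤ r k' := by
    intro k' h
    simp only [hr]
    rw [if_pos h]
    by_cases h2 : s k' = i
    · rw [if_pos h2, sub_self, zero_mul]
    · rw [if_neg h2, sub_zero, one_mul]
      exact hd k'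
  have hrnp : ∀ k', o k' ≠ i → r k' ≤ 0 := by
    intro k' h
    simp only [hr]
    rw [if_neg h]
    by_cases h2 : s k' = i
    · rw [if_pos h2, zero_sub]
      calc (-1 : ℝ) * d k' ≤ 0 * d k' := mul_le_mul_of_nonneg_right (by norm_num) (hd k')
      _ = 0 := by ring
    · rw [if_neg h2, sub_zero, zero_mul]
  have hallo : o k = i → ∀ k' ∈ (disp b).Kb, o k' = i := by
    intro h k' hk'
    rw [horig b k' hk', ← horig b k hk, h]
  have hallno : o k ≠ i → ∀ k' ∈ (disp b).Kb, o k' ≠ i := by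
    intro h k' hk' hcontra
    exact h (by rw [horig b k hk, ← horig b k' hk', hcontra])
  have hrpos : ¬ r k ≤ 0 → o k = i ∧ ¬ s k = i := by
    intro h
    by_cases h1 : o k = i
    · by_cases h2 : s k = i
      · exact absurd (le_of_eq (by simp only [hr]; rw [if_pos h1, if_pos h2, sub_self, zero_mul])) h
      · exact ⟨h1, h2⟩
    · exact absurd (hrnp k h1) h
  have hrneg : ¬ 0 ≤ r k → s k = i ∧ ¬ o k = i := by
    intro h
    by_cases h1 : o k = i
    · exact absurd (hrnn k h1) h
    · by_cases h2 : s k = i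
      · exact ⟨h2, h1⟩
      · exact absurd (ge_of_eq (by simp only [hr]; rw [if_neg h1, if_neg h2, sub_self, zero_mul])) h
  set cA1 : ℝ := ∑ j ∈ univ.filter (fun j => (i, j) ∈ A),
      (if k ∈ (disp b).Db (i, j) then x b {k} (i, j) else 0) with hcA1
  set cS : ℝ := ∑ j ∈ univ.filter (fun j => (i, j) ∈ A),
      (if k ∈ (disp b).Db (i, j) then 0
        else x b ((disp b).Kb \ (disp b).Db (i, j)) (i, j)) with hcS
  set cE' : ℝ := ∑ j ∈ univ.filter (fun j => (i, j) ∈ A),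
      (if (disp b).Kb \ (disp b).Db (i, j) = {k} then x b {k} (i, j) else 0) with hcE'
  set cA2 : ℝ := ∑ j ∈ univ.filter (fun j => (j, i) ∈ A),
      (if k ∈ (disp b).Db (j, i) then x b {k} (j, i) else 0) with hcA2
  set cS' : ℝ := ∑ j ∈ univ.filter (fun j => (j, i) ∈ A),
      (if k ∈ (disp b).Db (j, i) then 0
        else x b ((disp b).Kb \ (disp b).Db (j, i)) (j, i)) with hcS'
  set cE : ℝ := ∑ j ∈ univ.filter (fun j => (j, i) ∈ A),
      (if (disp b).Kb \ (disp b).Db (j, i) = {k} then x b {k} (j, i) else 0) with hcE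
  have hG1 : ∀ (a : N × N), ∑ D ∈ (Gset (disp b) a).filter (fun D => k ∈ D), x b D a
      = if k ∈ (disp b).Db a then x b {k} a
        else x b ((disp b).Kb \ (disp b).Db a) a := by
    intro a
    rw [aux_Gset_filter_mem (disp b) a hk, Finset.sum_singleton,
      apply_ite (fun D => x b D a)]
  have hG2 : ∀ (a : N × N), ∑ D ∈ (Gset (disp b) a).filter (fun D => D = {k}), x b D a
      = if (k ∈ (disp b).Db a ∨ (disp b).Kb \ (disp b).Db a = {k}) then x b {k} a
        else 0 := by
    intro a
    rw [aux_Gset_filter_eqk (disp b) a k]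
    by_cases hcond : (k ∈ (disp b).Db a ∨ (disp b).Kb \ (disp b).Db a = {k})
    · rw [if_pos hcond, if_pos hcond, Finset.sum_singleton]
    · rw [if_neg hcond, if_neg hcond, Finset.sum_empty]
  have hexcl : ∀ (a : N × N),
      ¬ (k ∈ (disp b).Db a ∧ (disp b).Kb \ (disp b).Db a = {k}) := by
    rintro a ⟨h1, h2⟩
    have : k ∈ (disp b).Kb \ (disp b).Db a := by
      rw [h2]; exact Finset.mem_singleton_self k
    exact (Finset.mem_sdiff.1 this).2 h1
  have hOut1 : ∑ j ∈ univ.filter (fun j => (i, j) ∈ A),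
        ∑ D ∈ (Gset (disp b) (i, j)).filter (fun D => k ∈ D), x b D (i, j)
      = cA1 + cS := by
    rw [hcA1, hcS, ← Finset.sum_add_distrib]
    apply Finset.sum_congr rfl
    intro j _
    rw [hG1 (i, j), aux_ite_split]
  have hIn1 : ∑ j ∈ univ.filter (fun j => (j, i) ∈ A),
        ∑ D ∈ (Gset (disp b) (j, i)).filter (fun D => k ∈ D), x b D (j, i)
      = cA2 + cS' := by
    rw [hcA2, hcS', ← Finset.sum_add_distrib]
    apply Finset.sum_congr rfl
    intro j _
    rw [hG1 (j, i), aux_ite_split]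
  have hOut2 : ∑ j ∈ univ.filter (fun j => (i, j) ∈ A),
        ∑ D ∈ (Gset (disp b) (i, j)).filter (fun D => D = {k}), x b D (i, j)
      = cA1 + cE' := by
    rw [hcA1, hcE', ← Finset.sum_add_distrib]
    apply Finset.sum_congr rfl
    intro j _
    rw [hG2 (i, j), aux_ite_or _ _ _ (hexcl (i, j))]
  have hIn2 : ∑ j ∈ univ.filter (fun j => (j, i) ∈ A),
        ∑ D ∈ (Gset (disp b) (j, i)).filter (fun D => D = {k}), x b D (j, i)
      = cA2 + cE := by
    rw [hcA2, hcE, ← Finset.sum_add_distrib]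
    apply Finset.sum_congr rfl
    intro j _
    rw [hG2 (j, i), aux_ite_or _ _ _ (hexcl (j, i))]
  have hS0 : 0 ≤ cS := by
    rw [hcS]
    apply Finset.sum_nonneg
    intro j _
    by_cases h : k ∈ (disp b).Db (i, j)
    · rw [if_pos h]
    · rw [if_neg h]; exact hx0 b _ _
  have hS'0 : 0 ≤ cS' := by
    rw [hcS']
    apply Finset.sum_nonneg
    intro j _
    by_cases h : k ∈ (disp b).Db (j, i)
    · rw [if_pos h]
    · rw [if_neg h]; exact hx0 b _ _
  by_cases hLe : Lset A (disp b) i = ∅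
  · -- no gadget at i : all incident arcs fully aggregated
    have hDb0out : ∀ j, (i, j) ∈ A → (disp b).Db (i, j) = ∅ := by
      intro j hj
      rw [← Finset.subset_empty, ← hLe]
      exact aux_Db_out_subset_Lset hj
    have hDb0in : ∀ j, (j, i) ∈ A → (disp b).Db (j, i) = ∅ := by
      intro j hj
      rw [← Finset.subset_empty, ← hLe]
      exact aux_Db_in_subset_Lset hj
    have hKbne : (disp b).Kb ≠ ∅ := fun h => (Finset.notMem_empty k) (h ▸ hk)
    have hGsetKb : ∀ (a : N × N), (disp b).Db a = ∅ → Gset (disp b) a = {(disp b).Kb} := by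
      intro a ha
      unfold Gset
      rw [ha, Finset.sdiff_empty, Finset.image_empty, Finset.union_empty, if_neg hKbne]
    set FKb := ∑ j ∈ univ.filter (fun j => (i, j) ∈ A), x b (disp b).Kb (i, j) with hFKb
    set BKb := ∑ j ∈ univ.filter (fun j => (j, i) ∈ A), x b (disp b).Kb (j, i) with hBKb
    have hcons2 : FKb - BKb = ∑ k' ∈ (disp b).Kb, r k' := by
      rw [← hsumr ((disp b).Kb), ← hflow b i, hFKb, hBKb]
      congr 1
      · apply Finset.sum_congr rfl
        intro j hj
        rw [Finset.mem_filter] at hj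
        rw [hGsetKb (i, j) (hDb0out j hj.2), Finset.sum_singleton]
      · apply Finset.sum_congr rfl
        intro j hj
        rw [Finset.mem_filter] at hj
        rw [hGsetKb (j, i) (hDb0in j hj.2), Finset.sum_singleton]
    have hA1 : cA1 = 0 := by
      rw [hcA1]
      apply Finset.sum_eq_zero
      intro j hj
      rw [Finset.mem_filter] at hj
      rw [if_neg (by rw [hDb0out j hj.2]; exact Finset.notMem_empty k)]
    have hA2 : cA2 = 0 := by
      rw [hcA2]
      apply Finset.sum_eq_zero
      intro j hj
      rw [Finset.mem_filter] at hj
      rw [if_neg (by rw [hDb0in j hj.2]; exact Finset.notMem_empty k)]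
    have hS : cS = FKb := by
      rw [hcS, hFKb]
      apply Finset.sum_congr rfl
      intro j hj
      rw [Finset.mem_filter] at hj
      rw [hDb0out j hj.2, Finset.sdiff_empty, if_neg (Finset.notMem_empty k)]
    have hS' : cS' = BKb := by
      rw [hcS', hBKb]
      apply Finset.sum_congr rfl
      intro j hj
      rw [Finset.mem_filter] at hj
      rw [hDb0in j hj.2, Finset.sdiff_empty, if_neg (Finset.notMem_empty k)]
    have hF0 : 0 ≤ FKb := by
      rw [hFKb]; exact Finset.sum_nonneg fun j _ => hx0 b _ _
    have hB0 : 0 ≤ BKb := by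
      rw [hBKb]; exact Finset.sum_nonneg fun j _ => hx0 b _ _
    by_cases hKbk : (disp b).Kb = {k}
    · have hE : cE = BKb := by
        rw [hcE, hBKb]
        apply Finset.sum_congr rfl
        intro j hj
        rw [Finset.mem_filter] at hj
        rw [hDb0in j hj.2, Finset.sdiff_empty, if_pos hKbk, ← hKbk]
      have hE' : cE' = FKb := by
        rw [hcE', hFKb]
        apply Finset.sum_congr rfl
        intro j hj
        rw [Finset.mem_filter] at hj
        rw [hDb0out j hj.2, Finset.sdiff_empty, if_pos hKbk, ← hKbk]
      have hrr : ∑ k' ∈ (disp b).Kb, r k' = r k := by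
        rw [hKbk, Finset.sum_singleton]
      constructor
      · rw [hOut1, hIn2, hgoalr]; linarith
      · rw [hOut2, hIn1, hgoalr]; linarith
    · have hE : cE = 0 := by
        rw [hcE]
        apply Finset.sum_eq_zero
        intro j hj
        rw [Finset.mem_filter] at hj
        rw [if_neg (by rw [hDb0in j hj.2, Finset.sdiff_empty]; exact hKbk)]
      have hE' : cE' = 0 := by
        rw [hcE']
        apply Finset.sum_eq_zero
        intro j hj
        rw [Finset.mem_filter] at hj
        rw [if_neg (by rw [hDb0out j hj.2, Finset.sdiff_empty]; exact hKbk)]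
      constructor
      · rw [hOut1, hIn2, hgoalr]
        by_cases hrs : r k ≤ 0
        · linarith
        · obtain ⟨h1, _⟩ := hrpos hrs
          have h2 : r k ≤ ∑ k' ∈ (disp b).Kb, r k' :=
            Finset.single_le_sum (fun k' hk' => hrnn k' (hallo h1 k' hk')) hk
          linarith
      · rw [hOut2, hIn1, hgoalr]
        by_cases hrs : 0 ≤ r k
        · linarith
        · obtain ⟨_, h1⟩ := hrneg hrs
          have h2 : -r k ≤ ∑ k' ∈ (disp b).Kb, -r k' :=
            Finset.single_le_sum (fun k' hk' => neg_nonneg.2 (hrnp k' (hallno h1 k' hk'))) hk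
          rw [Finset.sum_neg_distrib] at h2
          linarith
  · -- gadget available at i
    have hT1conv : ∑ j ∈ univ.filter
          (fun j => (i, j) ∈ A ∧ (({k} : Finset K) ∩ (disp b).Db (i, j)).Nonempty),
          x b {k} (i, j) = cA1 := by
      rw [hcA1, aux_sum_ite_filter]
      apply Finset.sum_congr rfl
      intro j _
      by_cases h : k ∈ (disp b).Db (i, j)
      · rw [if_pos (aux_singleton_inter_nonempty.2 h), if_pos h]
      · rw [if_neg (fun hn => h (aux_singleton_inter_nonempty.1 hn)), if_neg h]
    have hT2conv : ∑ j ∈ univ.filter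
          (fun j => (j, i) ∈ A ∧ (({k} : Finset K) ∩ (disp b).Db (j, i)).Nonempty),
          x b {k} (j, i) = cA2 := by
      rw [hcA2, aux_sum_ite_filter]
      apply Finset.sum_congr rfl
      intro j _
      by_cases h : k ∈ (disp b).Db (j, i)
      · rw [if_pos (aux_singleton_inter_nonempty.2 h), if_pos h]
      · rw [if_neg (fun hn => h (aux_singleton_inter_nonempty.1 hn)), if_neg h]
    by_cases hkL : k ∈ Lset A (disp b) i
    · -- k has an incident disaggregated arc at i
      set T3 := ∑ C ∈ (Tout A (disp b) i).filter
          (fun C => (({k} : Finset K) ∩ C).Nonempty), zout b i {k} C with hT3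
      set T4 := ∑ C ∈ (Tin A (disp b) i).filter
          (fun C => (C ∩ ({k} : Finset K)).Nonempty), zin b i C {k} with hT4
      have hf1 : cA1 - cA2 + (T3 - T4) = r k := by
        have h1 := heq1 b i hLe ({k} : Finset K) (aux_singleton_mem_Mset hkL)
        rw [hT1conv, hT2conv] at h1
        rw [hT3, hT4, h1, hsumr, Finset.sum_singleton]
      have hf2 : T3 ≤ cS := by
        have hstep : ∀ C ∈ (Tout A (disp b) i).filter
            (fun C => (({k} : Finset K) ∩ C).Nonempty),
            zout b i {k} C ≤ ∑ j ∈ univ.filter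
              (fun j => (i, j) ∈ A ∧ C = (disp b).Kb \ (disp b).Db (i, j)),
              x b C (i, j) := by
          intro C hC
          rw [Finset.mem_filter] at hC
          rw [heq3 b i hLe C hC.1]
          apply Finset.single_le_sum (f := fun D => zout b i D C)
            (fun D _ => (hz0 b i C D).2)
          rw [Finset.mem_filter]
          refine ⟨aux_singleton_mem_Mset hkL, ?_⟩
          rw [Finset.inter_comm]
          exact hC.2
        calc T3 ≤ ∑ C ∈ (Tout A (disp b) i).filter
              (fun C => (({k} : Finset K) ∩ C).Nonempty),
              ∑ j ∈ univ.filter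
                (fun j => (i, j) ∈ A ∧ C = (disp b).Kb \ (disp b).Db (i, j)),
                x b C (i, j) := by
              rw [hT3]; exact Finset.sum_le_sum hstep
        _ = cS := by
              have e : (Tout A (disp b) i).filter
                  (fun C => (({k} : Finset K) ∩ C).Nonempty)
                  = (Tout A (disp b) i).filter (fun C => k ∈ C) :=
                Finset.filter_congr (fun C _ => aux_singleton_inter_nonempty)
              rw [e, aux_Tout_group A (disp b) i k (fun j C => x b C (i, j)), hcS,
                aux_sum_ite_filter]
              apply Finset.sum_congr rfl
              intro j _
              by_cases h : k ∈ (disp b).Db (i, j)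
              · rw [if_neg (fun hn => (Finset.mem_sdiff.1 hn).2 h), if_pos h]
              · rw [if_pos (Finset.mem_sdiff.2 ⟨hk, h⟩), if_neg h]
      have hf5 : T4 ≤ cS' := by
        have hstep : ∀ C ∈ (Tin A (disp b) i).filter
            (fun C => (C ∩ ({k} : Finset K)).Nonempty),
            zin b i C {k} ≤ ∑ j ∈ univ.filter
              (fun j => (j, i) ∈ A ∧ C = (disp b).Kb \ (disp b).Db (j, i)),
              x b C (j, i) := by
          intro C hC
          rw [Finset.mem_filter] at hC
          rw [← heq2 b i hLe C hC.1]
          apply Finset.single_le_sum (f := fun D => zin b i C D)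
            (fun D _ => (hz0 b i C D).1)
          rw [Finset.mem_filter]
          exact ⟨aux_singleton_mem_Mset hkL, hC.2⟩
        calc T4 ≤ ∑ C ∈ (Tin A (disp b) i).filter
              (fun C => (C ∩ ({k} : Finset K)).Nonempty),
              ∑ j ∈ univ.filter
                (fun j => (j, i) ∈ A ∧ C = (disp b).Kb \ (disp b).Db (j, i)),
                x b C (j, i) := by
              rw [hT4]; exact Finset.sum_le_sum hstep
        _ = cS' := by
              have e : (Tin A (disp b) i).filter
                  (fun C => (C ∩ ({k} : Finset K)).Nonempty)
                  = (Tin A (disp b) i).filter (fun C => k ∈ C) :=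
                Finset.filter_congr (fun C _ => by
                  rw [Finset.inter_comm, aux_singleton_inter_nonempty])
              rw [e, aux_Tin_group A (disp b) i k (fun j C => x b C (j, i)), hcS',
                aux_sum_ite_filter]
              apply Finset.sum_congr rfl
              intro j _
              by_cases h : k ∈ (disp b).Db (j, i)
              · rw [if_neg (fun hn => (Finset.mem_sdiff.1 hn).2 h), if_pos h]
              · rw [if_pos (Finset.mem_sdiff.2 ⟨hk, h⟩), if_neg h]
      have hf3 : cE ≤ T4 := by
        by_cases hEx : ∃ j, (j, i) ∈ A ∧ (disp b).Kb \ (disp b).Db (j, i) = {k}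
        · obtain ⟨j0, hj0, hj0e⟩ := hEx
          have hkTin : ({k} : Finset K) ∈ Tin A (disp b) i :=
            aux_mem_Tin.2 ⟨⟨j0, hj0, hj0e.symm⟩, Finset.singleton_ne_empty k⟩
          have h2 := heq2 b i hLe ({k} : Finset K) hkTin
          have e1 : (Mset A (disp b) i).filter
              (fun D => (({k} : Finset K) ∩ D).Nonempty)
              = (Mset A (disp b) i).filter (fun D => k ∈ D) :=
            Finset.filter_congr (fun D _ => aux_singleton_inter_nonempty)
          rw [e1, aux_Mset_filter_mem hk, if_pos hkL, Finset.sum_singleton] at h2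
          have e2 : ∑ j ∈ univ.filter
              (fun j => (j, i) ∈ A ∧ ({k} : Finset K) = (disp b).Kb \ (disp b).Db (j, i)),
              x b {k} (j, i) = cE := by
            rw [hcE, aux_sum_ite_filter]
            apply Finset.sum_congr rfl
            intro j _
            by_cases h : (disp b).Kb \ (disp b).Db (j, i) = {k}
            · rw [if_pos h.symm, if_pos h]
            · rw [if_neg (fun hn => h hn.symm), if_neg h]
          rw [e2] at h2
          rw [hT4, ← h2]
          apply Finset.single_le_sum (f := fun C => zin b i C {k})
            (fun C _ => (hz0 b i C {k}).1)
          rw [Finset.mem_filter]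
          exact ⟨hkTin, ⟨k, Finset.mem_inter.2
            ⟨Finset.mem_singleton_self k, Finset.mem_singleton_self k⟩⟩⟩
        · have hE0 : cE = 0 := by
            rw [hcE]
            apply Finset.sum_eq_zero
            intro j hj
            rw [Finset.mem_filter] at hj
            rw [if_neg (fun h => hEx ⟨j, hj.2, h⟩)]
          rw [hE0, hT4]
          exact Finset.sum_nonneg fun C _ => (hz0 b i C {k}).1
      have hf4 : cE' ≤ T3 := by
        by_cases hEx : ∃ j, (i, j) ∈ A ∧ (disp b).Kb \ (disp b).Db (i, j) = {k}
        · obtain ⟨j0, hj0, hj0e⟩ := hEx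
          have hkTout : ({k} : Finset K) ∈ Tout A (disp b) i :=
            aux_mem_Tout.2 ⟨⟨j0, hj0, hj0e.symm⟩, Finset.singleton_ne_empty k⟩
          have h2 := heq3 b i hLe ({k} : Finset K) hkTout
          have e1 : (Mset A (disp b) i).filter
              (fun D => (({k} : Finset K) ∩ D).Nonempty)
              = (Mset A (disp b) i).filter (fun D => k ∈ D) :=
            Finset.filter_congr (fun D _ => aux_singleton_inter_nonempty)
          rw [e1, aux_Mset_filter_mem hk, if_pos hkL, Finset.sum_singleton] at h2
          have e2 : ∑ j ∈ univ.filter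
              (fun j => (i, j) ∈ A ∧ ({k} : Finset K) = (disp b).Kb \ (disp b).Db (i, j)),
              x b {k} (i, j) = cE' := by
            rw [hcE', aux_sum_ite_filter]
            apply Finset.sum_congr rfl
            intro j _
            by_cases h : (disp b).Kb \ (disp b).Db (i, j) = {k}
            · rw [if_pos h.symm, if_pos h]
            · rw [if_neg (fun hn => h hn.symm), if_neg h]
          rw [e2] at h2
          rw [hT3, h2]
          apply Finset.single_le_sum (f := fun C => zout b i {k} C)
            (fun C _ => (hz0 b i C {k}).2)
          rw [Finset.mem_filter]
          exact ⟨hkTout, ⟨k, Finset.mem_inter.2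
            ⟨Finset.mem_singleton_self k, Finset.mem_singleton_self k⟩⟩⟩
        · have hE0 : cE' = 0 := by
            rw [hcE']
            apply Finset.sum_eq_zero
            intro j hj
            rw [Finset.mem_filter] at hj
            rw [if_neg (fun h => hEx ⟨j, hj.2, h⟩)]
          rw [hE0, hT3]
          exact Finset.sum_nonneg fun C _ => (hz0 b i C {k}).2
      constructor
      · rw [hOut1, hIn2, hgoalr]; linarith
      · rw [hOut2, hIn1, hgoalr]; linarith
    · -- k is aggregated at i
      have hkD0 : k ∈ (disp b).Kb \ Lset A (disp b) i := Finset.mem_sdiff.2 ⟨hk, hkL⟩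
      have hknotDb_out : ∀ j, (i, j) ∈ A → k ∉ (disp b).Db (i, j) :=
        fun j hj hmem => hkL (aux_Db_out_subset_Lset hj hmem)
      have hknotDb_in : ∀ j, (j, i) ∈ A → k ∉ (disp b).Db (j, i) :=
        fun j hj hmem => hkL (aux_Db_in_subset_Lset hj hmem)
      have hD0sub_out : ∀ j, (i, j) ∈ A →
          (disp b).Kb \ Lset A (disp b) i ⊆ (disp b).Kb \ (disp b).Db (i, j) := by
        intro j hj k' hk'
        rw [Finset.mem_sdiff] at hk' ⊢
        exact ⟨hk'.1, fun h => hk'.2 (aux_Db_out_subset_Lset hj h)⟩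
      have hD0sub_in : ∀ j, (j, i) ∈ A →
          (disp b).Kb \ Lset A (disp b) i ⊆ (disp b).Kb \ (disp b).Db (j, i) := by
        intro j hj k' hk'
        rw [Finset.mem_sdiff] at hk' ⊢
        exact ⟨hk'.1, fun h => hk'.2 (aux_Db_in_subset_Lset hj h)⟩
      set T3 := ∑ C ∈ Tout A (disp b) i,
          zout b i ((disp b).Kb \ Lset A (disp b) i) C with hT3
      set T4 := ∑ C ∈ Tin A (disp b) i,
          zin b i C ((disp b).Kb \ Lset A (disp b) i) with hT4
      have hToutk : ∀ C ∈ Tout A (disp b) i, k ∈ C := by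
        intro C hC
        obtain ⟨⟨j, hj, rfl⟩, hne⟩ := aux_mem_Tout.1 hC
        exact Finset.mem_sdiff.2 ⟨hk, hknotDb_out j hj⟩
      have hTink : ∀ C ∈ Tin A (disp b) i, k ∈ C := by
        intro C hC
        obtain ⟨⟨j, hj, rfl⟩, hne⟩ := aux_mem_Tin.1 hC
        exact Finset.mem_sdiff.2 ⟨hk, hknotDb_in j hj⟩
      have hg1 : T3 - T4 = ∑ k' ∈ (disp b).Kb \ Lset A (disp b) i, r k' := by
        have h1 := heq1 b i hLe ((disp b).Kb \ Lset A (disp b) i)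
          (aux_agg_mem_Mset A (disp b) i)
        have hz1 : ∑ j ∈ univ.filter (fun j => (i, j) ∈ A ∧
            (((disp b).Kb \ Lset A (disp b) i) ∩ (disp b).Db (i, j)).Nonempty),
            x b ((disp b).Kb \ Lset A (disp b) i) (i, j) = 0 := by
          apply Finset.sum_eq_zero
          intro j hj
          exfalso
          rw [Finset.mem_filter] at hj
          obtain ⟨k', hk'⟩ := hj.2.2
          rw [Finset.mem_inter, Finset.mem_sdiff] at hk'
          exact hk'.1.2 (aux_Db_out_subset_Lset hj.2.1 hk'.2)
        have hz2 : ∑ j ∈ univ.filter (fun j => (j, i) ∈ A ∧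
            (((disp b).Kb \ Lset A (disp b) i) ∩ (disp b).Db (j, i)).Nonempty),
            x b ((disp b).Kb \ Lset A (disp b) i) (j, i) = 0 := by
          apply Finset.sum_eq_zero
          intro j hj
          exfalso
          rw [Finset.mem_filter] at hj
          obtain ⟨k', hk'⟩ := hj.2.2
          rw [Finset.mem_inter, Finset.mem_sdiff] at hk'
          exact hk'.1.2 (aux_Db_in_subset_Lset hj.2.1 hk'.2)
        have e3 : (Tout A (disp b) i).filter
            (fun C => (((disp b).Kb \ Lset A (disp b) i) ∩ C).Nonempty)
            = Tout A (disp b) i := by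
          apply Finset.filter_true_of_mem
          intro C hC
          exact ⟨k, Finset.mem_inter.2 ⟨hkD0, hToutk C hC⟩⟩
        have e4 : (Tin A (disp b) i).filter
            (fun C => (C ∩ ((disp b).Kb \ Lset A (disp b) i)).Nonempty)
            = Tin A (disp b) i := by
          apply Finset.filter_true_of_mem
          intro C hC
          exact ⟨k, Finset.mem_inter.2 ⟨hTink C hC, hkD0⟩⟩
        rw [hz1, hz2, e3, e4, hsumr] at h1
        rw [hT3, hT4]
        linarith [h1]
      have hA1 : cA1 = 0 := by
        rw [hcA1]
        apply Finset.sum_eq_zero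
        intro j hj
        rw [Finset.mem_filter] at hj
        rw [if_neg (hknotDb_out j hj.2)]
      have hA2 : cA2 = 0 := by
        rw [hcA2]
        apply Finset.sum_eq_zero
        intro j hj
        rw [Finset.mem_filter] at hj
        rw [if_neg (hknotDb_in j hj.2)]
      have hg3 : T3 ≤ cS := by
        have hstep : ∀ C ∈ Tout A (disp b) i,
            zout b i ((disp b).Kb \ Lset A (disp b) i) C
              ≤ ∑ j ∈ univ.filter
                (fun j => (i, j) ∈ A ∧ C = (disp b).Kb \ (disp b).Db (i, j)),
                x b C (i, j) := by
          intro C hC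
          rw [heq3 b i hLe C hC]
          apply Finset.single_le_sum (f := fun D => zout b i D C)
            (fun D _ => (hz0 b i C D).2)
          rw [Finset.mem_filter]
          exact ⟨aux_agg_mem_Mset A (disp b) i,
            ⟨k, Finset.mem_inter.2 ⟨hToutk C hC, hkD0⟩⟩⟩
        calc T3 ≤ ∑ C ∈ Tout A (disp b) i,
              ∑ j ∈ univ.filter
                (fun j => (i, j) ∈ A ∧ C = (disp b).Kb \ (disp b).Db (i, j)),
                x b C (i, j) := by
              rw [hT3]; exact Finset.sum_le_sum hstep
        _ = cS := by
              have e : Tout A (disp b) i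
                  = (Tout A (disp b) i).filter (fun C => k ∈ C) :=
                (Finset.filter_true_of_mem hToutk).symm
              rw [e, aux_Tout_group A (disp b) i k (fun j C => x b C (i, j)), hcS,
                aux_sum_ite_filter]
              apply Finset.sum_congr rfl
              intro j hj
              rw [Finset.mem_filter] at hj
              rw [if_pos (Finset.mem_sdiff.2 ⟨hk, hknotDb_out j hj.2⟩),
                if_neg (hknotDb_out j hj.2)]
      have hg4 : T4 ≤ cS' := by
        have hstep : ∀ C ∈ Tin A (disp b) i,
            zin b i C ((disp b).Kb \ Lset A (disp b) i)
              ≤ ∑ j ∈ univ.filter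
                (fun j => (j, i) ∈ A ∧ C = (disp b).Kb \ (disp b).Db (j, i)),
                x b C (j, i) := by
          intro C hC
          rw [← heq2 b i hLe C hC]
          apply Finset.single_le_sum (f := fun D => zin b i C D)
            (fun D _ => (hz0 b i C D).1)
          rw [Finset.mem_filter]
          exact ⟨aux_agg_mem_Mset A (disp b) i,
            ⟨k, Finset.mem_inter.2 ⟨hTink C hC, hkD0⟩⟩⟩
        calc T4 ≤ ∑ C ∈ Tin A (disp b) i,
              ∑ j ∈ univ.filter
                (fun j => (j, i) ∈ A ∧ C = (disp b).Kb \ (disp b).Db (j, i)),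
                x b C (j, i) := by
              rw [hT4]; exact Finset.sum_le_sum hstep
        _ = cS' := by
              have e : Tin A (disp b) i
                  = (Tin A (disp b) i).filter (fun C => k ∈ C) :=
                (Finset.filter_true_of_mem hTink).symm
              rw [e, aux_Tin_group A (disp b) i k (fun j C => x b C (j, i)), hcS',
                aux_sum_ite_filter]
              apply Finset.sum_congr rfl
              intro j hj
              rw [Finset.mem_filter] at hj
              rw [if_pos (Finset.mem_sdiff.2 ⟨hk, hknotDb_in j hj.2⟩),
                if_neg (hknotDb_in j hj.2)]
      have hT40 : 0 ≤ T4 := by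
        rw [hT4]
        exact Finset.sum_nonneg fun C _ => (hz0 b i C _).1
      have hT30 : 0 ≤ T3 := by
        rw [hT3]
        exact Finset.sum_nonneg fun C _ => (hz0 b i C _).2
      by_cases hD0 : (disp b).Kb \ Lset A (disp b) i = {k}
      · have hrr : ∑ k' ∈ (disp b).Kb \ Lset A (disp b) i, r k' = r k := by
          rw [hD0, Finset.sum_singleton]
        have hfE : cE ≤ T4 := by
          by_cases hEx : ∃ j, (j, i) ∈ A ∧ (disp b).Kb \ (disp b).Db (j, i) = {k}
          · obtain ⟨j0, hj0, hj0e⟩ := hEx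
            have hkTin : ({k} : Finset K) ∈ Tin A (disp b) i :=
              aux_mem_Tin.2 ⟨⟨j0, hj0, hj0e.symm⟩, Finset.singleton_ne_empty k⟩
            have h2 := heq2 b i hLe ({k} : Finset K) hkTin
            have e1 : (Mset A (disp b) i).filter
                (fun D => (({k} : Finset K) ∩ D).Nonempty)
                = (Mset A (disp b) i).filter (fun D => k ∈ D) :=
              Finset.filter_congr (fun D _ => aux_singleton_inter_nonempty)
            rw [e1, aux_Mset_filter_mem hk, if_neg hkL, hD0, Finset.sum_singleton] at h2
            have e2 : ∑ j ∈ univ.filter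
                (fun j => (j, i) ∈ A ∧ ({k} : Finset K) = (disp b).Kb \ (disp b).Db (j, i)),
                x b {k} (j, i) = cE := by
              rw [hcE, aux_sum_ite_filter]
              apply Finset.sum_congr rfl
              intro j _
              by_cases h : (disp b).Kb \ (disp b).Db (j, i) = {k}
              · rw [if_pos h.symm, if_pos h]
              · rw [if_neg (fun hn => h hn.symm), if_neg h]
            rw [e2] at h2
            rw [hT4, hD0, ← h2]
            exact Finset.single_le_sum (f := fun C => zin b i C {k})
              (fun C _ => (hz0 b i C {k}).1) hkTin
          · have hE0 : cE = 0 := by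
              rw [hcE]
              apply Finset.sum_eq_zero
              intro j hj
              rw [Finset.mem_filter] at hj
              rw [if_neg (fun h => hEx ⟨j, hj.2, h⟩)]
            rw [hE0]
            exact hT40
        have hfE' : cE' ≤ T3 := by
          by_cases hEx : ∃ j, (i, j) ∈ A ∧ (disp b).Kb \ (disp b).Db (i, j) = {k}
          · obtain ⟨j0, hj0, hj0e⟩ := hEx
            have hkTout : ({k} : Finset K) ∈ Tout A (disp b) i :=
              aux_mem_Tout.2 ⟨⟨j0, hj0, hj0e.symm⟩, Finset.singleton_ne_empty k⟩
            have h2 := heq3 b i hLe ({k} : Finset K) hkTout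
            have e1 : (Mset A (disp b) i).filter
                (fun D => (({k} : Finset K) ∩ D).Nonempty)
                = (Mset A (disp b) i).filter (fun D => k ∈ D) :=
              Finset.filter_congr (fun D _ => aux_singleton_inter_nonempty)
            rw [e1, aux_Mset_filter_mem hk, if_neg hkL, hD0, Finset.sum_singleton] at h2
            have e2 : ∑ j ∈ univ.filter
                (fun j => (i, j) ∈ A ∧ ({k} : Finset K) = (disp b).Kb \ (disp b).Db (i, j)),
                x b {k} (i, j) = cE' := by
              rw [hcE', aux_sum_ite_filter]
              apply Finset.sum_congr rfl
              intro j _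
              by_cases h : (disp b).Kb \ (disp b).Db (i, j) = {k}
              · rw [if_pos h.symm, if_pos h]
              · rw [if_neg (fun hn => h hn.symm), if_neg h]
            rw [e2] at h2
            rw [hT3, hD0, h2]
            exact Finset.single_le_sum (f := fun C => zout b i {k} C)
              (fun C _ => (hz0 b i C {k}).2) hkTout
          · have hE0 : cE' = 0 := by
              rw [hcE']
              apply Finset.sum_eq_zero
              intro j hj
              rw [Finset.mem_filter] at hj
              rw [if_neg (fun h => hEx ⟨j, hj.2, h⟩)]
            rw [hE0]
            exact hT30
        constructor
        · rw [hOut1, hIn2, hgoalr]; linarith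
        · rw [hOut2, hIn1, hgoalr]; linarith
      · have hE : cE = 0 := by
          rw [hcE]
          apply Finset.sum_eq_zero
          intro j hj
          rw [Finset.mem_filter] at hj
          rw [if_neg]
          intro h
          apply hD0
          have hsub : (disp b).Kb \ Lset A (disp b) i ⊆ {k} := h ▸ hD0sub_in j hj.2
          rcases Finset.subset_singleton_iff.1 hsub with h0 | h0
          · exact absurd (h0 ▸ hkD0) (Finset.notMem_empty k)
          · exact h0
        have hE' : cE' = 0 := by
          rw [hcE']
          apply Finset.sum_eq_zero
          intro j hj
          rw [Finset.mem_filter] at hj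
          rw [if_neg]
          intro h
          apply hD0
          have hsub : (disp b).Kb \ Lset A (disp b) i ⊆ {k} := h ▸ hD0sub_out j hj.2
          rcases Finset.subset_singleton_iff.1 hsub with h0 | h0
          · exact absurd (h0 ▸ hkD0) (Finset.notMem_empty k)
          · exact h0
        constructor
        · rw [hOut1, hIn2, hgoalr]
          by_cases hrs : r k ≤ 0
          · linarith
          · obtain ⟨h1, _⟩ := hrpos hrs
            have h2 : r k ≤ ∑ k' ∈ (disp b).Kb \ Lset A (disp b) i, r k' :=
              Finset.single_le_sum
                (fun k' hk' => hrnn k' (hallo h1 k' (Finset.mem_sdiff.1 hk').1)) hkD0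
            linarith
        · rw [hOut2, hIn1, hgoalr]
          by_cases hrs : 0 ≤ r k
          · linarith
          · obtain ⟨_, h1⟩ := hrneg hrs
            have h2 : -r k ≤ ∑ k' ∈ (disp b).Kb \ Lset A (disp b) i, -r k' :=
              Finset.single_le_sum
                (fun k' hk' => neg_nonneg.2 (hrnp k' (hallno h1 k' (Finset.mem_sdiff.1 hk').1)))
                hkD0
            rw [Finset.sum_neg_distrib] at h2
            linarith

end AuxHelpers6
/-- the chain of LP bounds
`z_LP(DA) ≥ z_LP(PAe) ≥ z_LP(PAi) ≥ z_LP(PA) ≥ z_LP(FA)`, and each of the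
partially-aggregated LP values is a valid lower bound on the MCND optimum. -/
theorem LP_bound_hierarchy {B : Type} [Fintype B]
    (A : Finset (N × N)) (u c f : N × N → ℝ) (d : K → ℝ) (o s : K → N)
    (disp : B → Dispersion N K)
    (hcov : ∀ k : K, ∃! b : B, k ∈ (disp b).Kb)
    (horig : ∀ b : B, ∀ k ∈ (disp b).Kb, o k = (disp b).ob)
    (hc : ∀ a, 0 ≤ c a) (hf : ∀ a, 0 ≤ f a) (hu : ∀ a, 0 ≤ u a) (hd : ∀ k, 0 ≤ d k)
    (hDA : (DAvals A u d o s c f).Nonempty)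
    (hFA : (FAvals A u d o s c f).Nonempty)
    (hPA : (PAvals A u d o s c f disp).Nonempty)
    (hPAi : (PAivals A u d o s c f disp).Nonempty)
    (hPAe : (PAevals A u d o s c f disp).Nonempty) :
    sInf (PAevals A u d o s c f disp) ≤ sInf (DAvals A u d o s c f)
    ∧ sInf (PAivals A u d o s c f disp) ≤ sInf (PAevals A u d o s c f disp)
    ∧ sInf (PAvals A u d o s c f disp) ≤ sInf (PAivals A u d o s c f disp)
    ∧ sInf (FAvals A u d o s c f) ≤ sInf (PAvals A u d o s c f disp)
    ∧ ∀ v ∈ MIPvals A u d o s c f,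
        sInf (PAvals A u d o s c f disp) ≤ v
        ∧ sInf (PAivals A u d o s c f disp) ≤ v
        ∧ sInf (PAevals A u d o s c f disp) ≤ v := by
  have hDAe := aux_DA_sub_PAe A u d o s c f disp hcov
  have hei := aux_PAe_sub_PAi A u d o s c f disp horig hd
  have hip := aux_PAi_sub_PA A u d o s c f disp
  have hpf := aux_PA_sub_FA A u d o s c f disp hcov horig
  have hbPA : BddBelow (PAvals A u d o s c f disp) :=
    ⟨0, fun v hv => aux_PA_val_nonneg hc hf v hv⟩
  have hbPAi : BddBelow (PAivals A u d o s c f disp) := BddBelow.mono hip hbPA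
  have hbPAe : BddBelow (PAevals A u d o s c f disp) := BddBelow.mono hei hbPAi
  have hbFA : BddBelow (FAvals A u d o s c f) :=
    ⟨0, fun v hv => aux_FA_val_nonneg hc hf v hv⟩
  refine ⟨?_, ?_, ?_, ?_, ?_⟩
  · exact le_csInf hDA (fun v hv => csInf_le hbPAe (hDAe hv))
  · exact le_csInf hPAe (fun v hv => csInf_le hbPAi (hei hv))
  · exact le_csInf hPAi (fun v hv => csInf_le hbPA (hip hv))
  · exact le_csInf hPA (fun v hv => csInf_le hbFA (hpf hv))
  · intro v hv
    have h1 : v ∈ PAevals A u d o s c f disp := hDAe (aux_MIP_sub_DA A u d o s c f hv)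
    have h2 := hei h1
    have h3 := hip h2
    exact ⟨csInf_le hbPA h3, csInf_le hbPAi h2, csInf_le hbPAe h1⟩
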